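/- Let A ∈ F^{[m,n]} and B ∈ F^{[m',n]}, and let x ≠ 0. Suppose (λ, x) is a mode-k B-eigenpair and (μ, x) is a mode-l B-eigenpair of A (with the same eigenvector x). Assume further that if m = m' then B x^m ≠ 0 (when m ≠ m' the normalization B x^{m'} = 1 holds). Then λ = μ. -/
import Mathlib


open Finset

/-- Mode-`k` contraction: `(A^(k) x^{m-1})_j`. -/
def modeContr {R : Type*} [CommRing R] {m n : ℕ} (A : (Fin m → Fin n) → R)
    (k : Fin m) (x : Fin n → R) (j : Fin n) : R :=
  ∑ i : Fin m → Fin n, if i k = j then A i * ∏ l ∈ Finset.univ.erase k, x (i l) else 0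

/-- The multilinear form `A x^m`. -/
def tform {R : Type*} [CommRing R] {m n : ℕ} (A : (Fin m → Fin n) → R)
    (x : Fin n → R) : R :=
  ∑ i : Fin m → Fin n, A i * ∏ l, x (i l)

lemma contract_eq {R : Type*} [CommRing R] {m n : ℕ} (A : (Fin m → Fin n) → R)
    (k : Fin m) (x : Fin n → R) :
    ∑ j, x j * modeContr A k x j = tform A x := by
  unfold modeContr tform
  simp only [Finset.mul_sum]
  rw [Finset.sum_comm]
  refine Finset.sum_congr rfl fun i _ => ?_
  rw [Finset.sum_eq_single (i k)]
  · rw [if_pos rfl, mul_comm (x (i k)) _, mul_assoc,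
      Finset.prod_erase_mul Finset.univ (fun l => x (i l)) (Finset.mem_univ k)]
  · intro j _ hj
    rw [if_neg (fun h => hj h.symm), mul_zero]
  · intro h; exact absurd (Finset.mem_univ _) h

/-- If `(λ, x)` is a mode-`k` `B`-eigenpair and `(μ, x)` is a mode-`l` `B`-eigenpair
with the same eigenvector `x ≠ 0`, where `B x^m ≠ 0` if `m = m'` and the
normalization `B x^{m'} = 1` holds if `m ≠ m'`, then `λ = μ`. -/
theorem eigenvalue_eq_of_same_eigenvector {m m' n : ℕ} (hm : 2 ≤ m) (hm' : 2 ≤ m')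
    (A : (Fin m → Fin n) → ℂ) (B : (Fin m' → Fin n) → ℂ) (k l : Fin m)
    (lam mu : ℂ) (x : Fin n → ℂ) (hx : x ≠ 0)
    (hk : ∀ j, modeContr A k x j = lam * modeContr B ⟨0, by omega⟩ x j)
    (hl : ∀ j, modeContr A l x j = mu * modeContr B ⟨0, by omega⟩ x j)
    (hBeq : m = m' → tform B x ≠ 0)
    (hBne : m ≠ m' → tform B x = 1) :
    lam = mu := by
  have hB : tform B x ≠ 0 := by
    by_cases h : m = m'
    · exact hBeq h
    · rw [hBne h]; exact one_ne_zero
  have e1 : tform A x = lam * tform B x := by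
    rw [← contract_eq A k x, ← contract_eq B ⟨0, by omega⟩ x, Finset.mul_sum]
    exact Finset.sum_congr rfl fun j _ => by rw [hk j]; ring
  have e2 : tform A x = mu * tform B x := by
    rw [← contract_eq A l x, ← contract_eq B ⟨0, by omega⟩ x, Finset.mul_sum]
    exact Finset.sum_congr rfl fun j _ => by rw [hl j]; ring
  exact mul_right_cancel₀ hB (e1 ▸ e2)
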